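/- Let d ≥ 3 be odd and let k be an integer with 1 ≤ k ≤ (d−1)/2. There is a constant c > 0 (depending only on d and k) such that for every odd prime power q there are sets X, Y ⊆ 𝔽_q^d and r ∈ 𝔽_q^* with |X| ≥ c·q^{d−k−1}, |Y| = q^k, and ‖x − y‖ = r for every pair (x,y) ∈ X × Y. -/

import Mathlib

/-!
Pick `a, b ∈ 𝔽_q` with `a² + b² = -1`. Then `(1, a, b, 0)` and `(0, b, -a, 1)` span a totally
isotropic plane of `𝔽_q⁴` and `(1, a, b)` spans an isotropic line of `𝔽_q³`. Norms add over
disjoint blocks of coordinates, so `⌊k/2⌋` such planes and, for odd `k`, one such line give a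
totally isotropic `k`-dimensional subspace `Y` of `𝔽_q^d`. For `x ⊥ Y` we have `‖x - y‖ = ‖x‖`, so
`X` can be any set of vectors of `Y^⊥` of one norm `r ≠ 0`. If `d = 2k + 1`, a coset of `Y` will
do. Otherwise the norm on `Y^⊥` contains a hyperbolic term `p² - u²`, and `p² - u² = c` has at
least `q - 1` solutions for every `c`; this leaves at least `(q - 1) q^(d-k-2) ≥ q^(d-k-1) / 2`
choices of `x`.
-/

def fnorm {F : Type*} [CommRing F] {d : ℕ} (x : Fin d → F) : F := ∑ i, (x i) ^ 2

open Finset Function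

namespace Fin

variable {m n : ℕ}

theorem append_injective2 {α : Type*} :
    Injective2 (Fin.append : (Fin m → α) → (Fin n → α) → Fin (m + n) → α) :=
  fun x x' y y' h =>
    Prod.ext_iff.1 <| (Fin.appendEquiv m n).injective (a₁ := (x, y)) (a₂ := (x', y')) h

theorem append_sub_append {G : Type*} [SubNegMonoid G] (x x' : Fin m → G) (y y' : Fin n → G) :
    Fin.append x y - Fin.append x' y' = Fin.append (x - x') (y - y') := by
  ext i
  refine Fin.addCases (fun i => ?_) (fun i => ?_) i <;> simp

end Fin

section CommRing

variable {R : Type*} [CommRing R]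

theorem fnorm_append {m n : ℕ} (x : Fin m → R) (y : Fin n → R) :
    fnorm (Fin.append x y) = fnorm x + fnorm y := by
  simp [fnorm, Fin.sum_univ_add]

variable (R) in
def HasSingleDistanceSets (n s t : ℕ) (r : R) : Prop :=
  ∃ X Y : Finset (Fin n → R), s ≤ #X ∧ #Y = t ∧ ∀ x ∈ X, ∀ y ∈ Y, fnorm (x - y) = r

namespace HasSingleDistanceSets

variable {n s t : ℕ} {r : R}

theorem of_injOn {P T : Type*} (A : Finset P) (B : Finset T) (f : P → Fin n → R)
    (g : T → Fin n → R) (hs : s ≤ #A) (ht : #B = t) (hf : Set.InjOn f A) (hg : Set.InjOn g B)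
    (hfg : ∀ p ∈ A, ∀ b ∈ B, fnorm (f p - g b) = r) : HasSingleDistanceSets R n s t r := by
  classical
  refine ⟨A.image f, B.image g, ?_, ?_, ?_⟩
  · rwa [card_image_of_injOn hf]
  · rwa [card_image_of_injOn hg]
  · simp only [mem_image]
    rintro _ ⟨p, hp, rfl⟩ _ ⟨b, hb, rfl⟩
    exact hfg p hp b hb

theorem append {n' s' t' : ℕ} {r' : R} (h : HasSingleDistanceSets R n s t r)
    (h' : HasSingleDistanceSets R n' s' t' r') :
    HasSingleDistanceSets R (n + n') (s * s') (t * t') (r + r') := by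
  classical
  obtain ⟨X, Y, hX, hY, hXY⟩ := h
  obtain ⟨X', Y', hX', hY', hXY'⟩ := h'
  refine ⟨image₂ Fin.append X X', image₂ Fin.append Y Y', ?_, ?_, ?_⟩
  · rw [card_image₂ Fin.append_injective2]
    exact Nat.mul_le_mul hX hX'
  · rw [card_image₂ Fin.append_injective2, hY, hY']
  · simp only [mem_image₂]
    rintro _ ⟨x, hx, x', hx', rfl⟩ _ ⟨y, hy, y', hy', rfl⟩
    rw [Fin.append_sub_append, fnorm_append, hXY x hx y hy, hXY' x' hx' y' hy']

end HasSingleDistanceSets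

end CommRing

theorem FiniteField.exists_sq_add_sq_eq_neg_one (F : Type*) [Field F] [Fintype F] :
    ∃ a b : F, a ^ 2 + b ^ 2 = -1 := by
  have : NeZero (ringChar F) := ⟨CharP.char_ne_zero_of_finite F _⟩
  obtain ⟨a, b, h⟩ := CharP.sq_add_sq F (ringChar F) (-1)
  exact ⟨a, b, by simpa using h⟩

theorem pow_add_two_le_two_mul {q : ℕ} (hq : 2 ≤ q) (n : ℕ) :
    q ^ (n + 2) ≤ 2 * ((q - 1) * (q * q ^ n)) := by
  calc q ^ (n + 2) = q * (q * q ^ n) := by ring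
    _ ≤ 2 * (q - 1) * (q * q ^ n) := Nat.mul_le_mul_right _ (by omega)
    _ = 2 * ((q - 1) * (q * q ^ n)) := by ring

section FiniteField

variable {F : Type*} [Field F] [Fintype F]

theorem card_sub_one_mul_card_le_card_filter_sq_sub_sq [DecidableEq F] {E : Type*} [Fintype E]
    (h2 : (2 : F) ≠ 0) (c : E → F) :
    (Fintype.card F - 1) * Fintype.card E ≤
      #{x : (F × F) × E | x.1.1 ^ 2 - x.1.2 ^ 2 = c x.2} := by
  calc (Fintype.card F - 1) * Fintype.card E = #((univ.erase (0 : F)) ×ˢ (univ : Finset E)) := by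
        rw [card_product, card_erase_of_mem (mem_univ _), card_univ, card_univ]
    _ ≤ _ := by
      -- `p + u = t` and `p - u = c / t`
      refine card_le_card_of_injOn
        (fun te => (((te.1 + c te.2 / te.1) / 2, (te.1 - c te.2 / te.1) / 2), te.2)) ?_ ?_
      · rintro ⟨t, e⟩ hte
        have ht : t ≠ 0 := by simpa using hte
        simp only [coe_filter, mem_univ, true_and, Set.mem_ofPred_eq]
        field_simp
        ring
      · rintro ⟨t, e⟩ - ⟨t', e'⟩ - h
        simp only [Prod.mk.injEq] at h
        obtain ⟨⟨hp, hu⟩, rfl⟩ := h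
        rw [div_left_inj' h2] at hp hu
        have h2t : (2 : F) * t = 2 * t' := by linear_combination hp + hu
        simp [mul_left_cancel₀ h2 h2t]

variable {a b : F}

theorem hasSingleDistanceSets_four (hab : a ^ 2 + b ^ 2 = -1) :
    HasSingleDistanceSets F 4 (Fintype.card F ^ 2) (Fintype.card F ^ 2) 0 := by
  let v : F × F → Fin 4 → F := fun st => ![st.1, a * st.1 + b * st.2, b * st.1 - a * st.2, st.2]
  have hv : Injective v := fun st st' h => Prod.ext (congrFun h 0) (congrFun h 3)
  refine .of_injOn univ univ v v (by simp [sq]) (by simp [sq]) hv.injOn hv.injOn ?_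
  rintro ⟨s, t⟩ - ⟨s', t'⟩ -
  simp [v, fnorm, Fin.sum_univ_four]
  linear_combination ((s - s') ^ 2 + (t - t') ^ 2) * hab

theorem hasSingleDistanceSets_four_mul (hab : a ^ 2 + b ^ 2 = -1) (j : ℕ) :
    HasSingleDistanceSets F (4 * j) (Fintype.card F ^ (2 * j)) (Fintype.card F ^ (2 * j)) 0 := by
  induction j with
  | zero => exact ⟨univ, univ, by simp, by simp, fun x _ y _ => by simp [fnorm]⟩
  | succ j ih => simpa [mul_add, pow_add] using ih.append (hasSingleDistanceSets_four hab)

theorem hasSingleDistanceSets_three (hab : a ^ 2 + b ^ 2 = -1) :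
    HasSingleDistanceSets F 3 (Fintype.card F) (Fintype.card F) (-1) := by
  refine .of_injOn univ univ (fun l => ![l, a * l - b, b * l + a]) (fun l => ![l, a * l, b * l])
    (by simp) (by simp) (fun l _ l' _ h => congrFun h 0) (fun l _ l' _ h => congrFun h 0) ?_
  rintro l - l' -
  simp [fnorm, Fin.sum_univ_three]
  linear_combination ((l - l') ^ 2 + 1) * hab

/-- `(0, a, b)` and `(0, -b, a)` are orthogonal of norm `-1`, so the first three coordinates of
`X` carry the form `p² - u² - μ²`. -/
theorem hasSingleDistanceSets_three_add (hab : a ^ 2 + b ^ 2 = -1) (h2 : (2 : F) ≠ 0)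
    (n : ℕ) (r : F) :
    HasSingleDistanceSets F (3 + n)
      ((Fintype.card F - 1) * (Fintype.card F * Fintype.card F ^ n)) 1 r := by
  classical
  refine .of_injOn
    {x : (F × F) × F × (Fin n → F) | x.1.1 ^ 2 - x.1.2 ^ 2 = r + x.2.1 ^ 2 - fnorm x.2.2}
    (univ : Finset Unit)
    (fun x => Fin.append ![x.1.1, a * x.1.2 - b * x.2.1, b * x.1.2 + a * x.2.1] x.2.2) 0
    ?_ (by simp) ?_ (by simp) ?_
  · simpa using card_sub_one_mul_card_le_card_filter_sq_sub_sq h2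
      (fun x : F × (Fin n → F) => r + x.1 ^ 2 - fnorm x.2)
  · rintro ⟨⟨p, u⟩, μ, z⟩ - ⟨⟨p', u'⟩, μ', z'⟩ - h
    obtain ⟨h, rfl⟩ := Fin.append_injective2 h
    have h₀ : p = p' := congrFun h 0
    have h₁ : a * u - b * μ = a * u' - b * μ' := congrFun h 1
    have h₂ : b * u + a * μ = b * u' + a * μ' := congrFun h 2
    have hu : u = u' := by linear_combination -a * h₁ - b * h₂ + (u - u') * hab
    have hμ : μ = μ' := by linear_combination b * h₁ - a * h₂ + (μ - μ') * hab
    simp [h₀, hu, hμ]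
  · rintro ⟨⟨p, u⟩, μ, z⟩ hx - -
    rw [mem_filter_univ] at hx
    rw [Pi.zero_apply, sub_zero, fnorm_append]
    simp [fnorm, Fin.sum_univ_three] at hx ⊢
    linear_combination (u ^ 2 + μ ^ 2) * hab + hx

/-- `x - y = (l - l') (1, a, b, 0) + u (0, b, -a, 0) + p e₄`, where the first vector is isotropic
and orthogonal to the other two, of norms `-1` and `1`. -/
theorem hasSingleDistanceSets_four_add (hab : a ^ 2 + b ^ 2 = -1) (h2 : (2 : F) ≠ 0)
    (n : ℕ) (r : F) :
    HasSingleDistanceSets F (4 + n)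
      ((Fintype.card F - 1) * (Fintype.card F * Fintype.card F ^ n)) (Fintype.card F) r := by
  classical
  refine .of_injOn {x : (F × F) × F × (Fin n → F) | x.1.1 ^ 2 - x.1.2 ^ 2 = r - fnorm x.2.2} univ
    (fun x => Fin.append ![x.2.1, a * x.2.1 + b * x.1.2, b * x.2.1 - a * x.1.2, x.1.1] x.2.2)
    (fun l => Fin.append ![l, a * l, b * l, 0] 0) ?_ (by simp)
    ?_ (fun l _ l' _ h => congrFun (Fin.append_injective2 h).1 0) ?_
  · simpa using card_sub_one_mul_card_le_card_filter_sq_sub_sq h2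
      (fun x : F × (Fin n → F) => r - fnorm x.2)
  · rintro ⟨⟨p, u⟩, l, z⟩ - ⟨⟨p', u'⟩, l', z'⟩ - h
    obtain ⟨h, rfl⟩ := Fin.append_injective2 h
    obtain rfl : l = l' := congrFun h 0
    have h₁ : a * l + b * u = a * l + b * u' := congrFun h 1
    have h₂ : b * l - a * u = b * l - a * u' := congrFun h 2
    have h₃ : p = p' := congrFun h 3
    have hu : u = u' := by linear_combination -b * h₁ + a * h₂ + (u - u') * hab
    simp [h₃, hu]
  · rintro ⟨⟨p, u⟩, l, z⟩ hx l' -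
    rw [mem_filter_univ] at hx
    rw [Fin.append_sub_append, fnorm_append, sub_zero]
    simp [fnorm, Fin.sum_univ_four] at hx ⊢
    linear_combination ((l - l') ^ 2 + u ^ 2) * hab + hx

theorem exists_hasSingleDistanceSets_of_odd (hab : a ^ 2 + b ^ 2 = -1) (h2 : (2 : F) ≠ 0)
    {m : ℕ} (hm : Odd m) : ∃ s r, r ≠ 0 ∧ Fintype.card F ^ (m - 1) ≤ 2 * s ∧
      HasSingleDistanceSets F m s 1 r := by
  obtain ⟨_ | i, rfl⟩ := hm
  · exact ⟨1, 1, one_ne_zero, by simp, {fun _ => 1}, {0}, le_rfl, rfl, by simp [fnorm]⟩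
  · refine ⟨(Fintype.card F - 1) * (Fintype.card F * Fintype.card F ^ (2 * i)), 1, one_ne_zero,
      pow_add_two_le_two_mul Fintype.one_lt_card (2 * i), ?_⟩
    rw [show 2 * (i + 1) + 1 = 3 + 2 * i by ring]
    exact hasSingleDistanceSets_three_add hab h2 (2 * i) 1

theorem exists_hasSingleDistanceSets_add_two_of_odd (hab : a ^ 2 + b ^ 2 = -1)
    (h2 : (2 : F) ≠ 0) {m : ℕ} (hm : Odd m) : ∃ s r, r ≠ 0 ∧ Fintype.card F ^ m ≤ 2 * s ∧
      HasSingleDistanceSets F (m + 2) s (Fintype.card F) r := by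
  obtain ⟨_ | i, rfl⟩ := hm
  · exact ⟨_, -1, by simp, by simp; omega, hasSingleDistanceSets_three hab⟩
  · refine ⟨(Fintype.card F - 1) * (Fintype.card F * Fintype.card F ^ (2 * i + 1)), 1,
      one_ne_zero, pow_add_two_le_two_mul Fintype.one_lt_card (2 * i + 1), ?_⟩
    rw [show 2 * (i + 1) + 1 + 2 = 4 + (2 * i + 1) by ring]
    exact hasSingleDistanceSets_four_add hab h2 (2 * i + 1) 1

end FiniteField

theorem single_distance_construction_general (d k : ℕ) (hdo : Odd d) (hk' : k ≤ (d - 1) / 2) :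
    ∃ c : ℝ, 0 < c ∧
      ∀ (q : ℕ), Odd q → IsPrimePow q →
      ∀ (F : Type) [Field F] [Fintype F] [DecidableEq F], Fintype.card F = q →
      ∃ (X Y : Finset (Fin d → F)) (r : F), r ≠ 0 ∧
        c * (q : ℝ) ^ (d - k - 1) ≤ (X.card : ℝ) ∧
        Y.card = q ^ k ∧
        ∀ x ∈ X, ∀ y ∈ Y, fnorm (x - y) = r := by
  refine ⟨1 / 2, one_half_pos, fun q hq _ F _ _ _ hF => ?_⟩
  have h2 : (2 : F) ≠ 0 := Ring.two_ne_zero fun h =>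
    Nat.not_even_iff_odd.mpr hq (hF ▸ Nat.even_iff.mpr (FiniteField.even_card_of_char_two h))
  obtain ⟨a, b, hab⟩ := FiniteField.exists_sq_add_sq_eq_neg_one F
  suffices ∃ s r, r ≠ 0 ∧ q ^ (d - k - 1) ≤ 2 * s ∧ HasSingleDistanceSets F d s (q ^ k) r by
    obtain ⟨s, r, hr, hs, X, Y, hX, hY, hXY⟩ := this
    refine ⟨X, Y, r, hr, ?_, hY, hXY⟩
    have : (q : ℝ) ^ (d - k - 1) ≤ 2 * #X := by exact_mod_cast hs.trans (by omega)
    linarith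
  subst hF
  have hd := Nat.odd_iff.mp hdo
  obtain ⟨j, rfl | rfl⟩ := Nat.even_or_odd' k
  · obtain ⟨m, rfl⟩ : ∃ m, d = 4 * j + m := ⟨d - 4 * j, by omega⟩
    obtain ⟨s, r, hr, hs, h⟩ :=
      exists_hasSingleDistanceSets_of_odd hab h2 (m := m) (Nat.odd_iff.mpr (by omega))
    refine ⟨_, r, hr, ?_, by simpa using (hasSingleDistanceSets_four_mul hab j).append h⟩
    calc _ = Fintype.card F ^ (2 * j) * Fintype.card F ^ (m - 1) := by
          rw [← pow_add]; congr 1; omega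
      _ ≤ _ := by rw [mul_left_comm]; exact Nat.mul_le_mul_left _ hs
  · obtain ⟨m, rfl⟩ : ∃ m, d = 4 * j + (m + 2) := ⟨d - 4 * j - 2, by omega⟩
    obtain ⟨s, r, hr, hs, h⟩ :=
      exists_hasSingleDistanceSets_add_two_of_odd hab h2 (m := m) (Nat.odd_iff.mpr (by omega))
    refine ⟨_, r, hr, ?_, by simpa [pow_succ] using (hasSingleDistanceSets_four_mul hab j).append h⟩
    calc _ = Fintype.card F ^ (2 * j) * Fintype.card F ^ m := by
          rw [← pow_add]; congr 1; omega
      _ ≤ _ := by rw [mul_left_comm]; exact Nat.mul_le_mul_left _ hs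

/-- **Proposition (two large sets at a single distance).**
For odd `d ≥ 3` and `1 ≤ k ≤ (d−1)/2` there is `c > 0` such that for every odd prime power `q`
there are `X, Y ⊆ 𝔽_q^d` and `r ∈ 𝔽_q^*` with `|X| ≥ c·q^(d−k−1)`, `|Y| = q^k`, and every pair
of `X × Y` at distance `r`. -/
theorem single_distance_construction (d k : ℕ) (hd : 3 ≤ d) (hdo : Odd d)
    (hk : 1 ≤ k) (hk' : k ≤ (d - 1) / 2) :
    ∃ c : ℝ, 0 < c ∧
      ∀ (q : ℕ), Odd q → IsPrimePow q →
      ∀ (F : Type) [Field F] [Fintype F] [DecidableEq F], Fintype.card F = q →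
      ∃ (X Y : Finset (Fin d → F)) (r : F), r ≠ 0 ∧
        c * (q : ℝ) ^ (d - k - 1) ≤ (X.card : ℝ) ∧
        Y.card = q ^ k ∧
        ∀ x ∈ X, ∀ y ∈ Y, fnorm (x - y) = r :=
  single_distance_construction_general d k hdo hk'
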